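/- Suppose g is concave and differentiable. If for a mixed stopping strategy p̂ the first-order condition f(x) − E_x[φ_p̂(X_1)] + g′(p̂_x h(x) + (1−p̂_x) E_x[ψ_p̂(X_1)]) · (h(x) − E_x[ψ_p̂(X_1)]) = 0 holds for every x ∈ E, then p̂ is an equilibrium. -/

import Mathlib

/-!
Analytic model of the time-inconsistent stopping framework of Christensen & Lindensjö,
"Time-inconsistent stopping, myopic adjustment & equilibrium stability".

A time-homogeneous Markov chain `X` on a finite state space `E` is encoded by its
transition matrix `P` (`P x y = P_x(X_1 = y)`).  A mixed stopping strategy is a vector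
`p ∈ [0,1]^E`; the associated stopping time is `τ_p = min {n ≥ 0 : Y_n ≤ p_{X_n}}`,
where the `Y_n` are i.i.d. uniform randomization devices.  The quantity
`phi P p f x = E_x[f(X_{τ_p})]` (with the convention `f(X_{τ_p}) := lim_n f(X_n)` on
`{τ_p = ∞}`, the limit existing a.s. by absorption) is realized analytically, via
dominated convergence, as the limit in `n` of the finite-horizon values
`phiSeq P p f n x = E_x[f(X_{τ_p ∧ n})]`, which satisfy the one-step recursion given
by the Markov property.  Likewise `step P v x = E_x[v(X_1)]`.
-/

open Filter

variable {E : Type*}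

/-- One-step expectation operator: `step P v x = E_x[v(X_1)] = ∑ y, P x y * v y`. -/
noncomputable def step [Fintype E] (P : E → E → ℝ) (v : E → ℝ) (x : E) : ℝ :=
  ∑ y, P x y * v y

/-- Finite-horizon value `phiSeq P p f n x = E_x[f(X_{τ_p ∧ n})]`. -/
noncomputable def phiSeq [Fintype E] (P : E → E → ℝ) (p f : E → ℝ) : ℕ → E → ℝ
  | 0 => f
  | n + 1 => fun x => p x * f x + (1 - p x) * step P (phiSeq P p f n) x

/-- `phi P p f x = E_x[f(X_{τ_p})]`, with the convention `f(X_{τ_p}) := lim_n f(X_n)`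
on `{τ_p = ∞}`; by dominated convergence it is the limit of the finite-horizon values. -/
noncomputable def phi [Fintype E] (P : E → E → ℝ) (p f : E → ℝ) (x : E) : ℝ :=
  limUnder atTop fun n => phiSeq P p f n x

/-- `P` is a transition matrix (row-stochastic). -/
def IsTransition [Fintype E] (P : E → E → ℝ) : Prop :=
  (∀ x y, 0 ≤ P x y) ∧ ∀ x, ∑ y, P x y = 1

/-- `a` is an absorbing state of the chain. -/
def IsAbsorbingState (P : E → E → ℝ) (a : E) : Prop := P a a = 1

/-- The chain is absorbing: from each starting state, some absorbing state is reached
with positive probability in a finite number of steps. -/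
def IsAbsorbingChain [Fintype E] [DecidableEq E] (P : E → E → ℝ) : Prop :=
  ∀ x : E, ∃ (a : E) (n : ℕ), IsAbsorbingState P a ∧ 0 < ((Matrix.of P) ^ n) x a

/-- A mixed stopping strategy: a vector in `[0,1]^E`. -/
def IsStrategy (p : E → ℝ) : Prop := ∀ x, p x ∈ Set.Icc (0 : ℝ) 1

/-- `Kval P f h g p x q
      = q f(x) + (1-q) E_x[φ_p(X_1)] + g (q h(x) + (1-q) E_x[ψ_p(X_1)])`. -/
noncomputable def Kval [Fintype E] (P : E → E → ℝ) (f h : E → ℝ) (g : ℝ → ℝ)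
    (p : E → ℝ) (x : E) (q : ℝ) : ℝ :=
  q * f x + (1 - q) * step P (phi P p f) x
    + g (q * h x + (1 - q) * step P (phi P p h) x)

/-- `Jval P f h g p x = φ_p(x) + g(ψ_p(x)) = E_x[f(X_{τ_p})] + g(E_x[h(X_{τ_p})])`. -/
noncomputable def Jval [Fintype E] (P : E → E → ℝ) (f h : E → ℝ) (g : ℝ → ℝ)
    (p : E → ℝ) (x : E) : ℝ :=
  phi P p f x + g (phi P p h x)

/-- Subgame perfect Nash equilibrium (condition (EqI)). -/
def IsEquilibrium [Fintype E] (P : E → E → ℝ) (f h : E → ℝ) (g : ℝ → ℝ)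
    (p : E → ℝ) : Prop :=
  ∀ x : E, ∀ q ∈ Set.Icc (0 : ℝ) 1, Kval P f h g p x q ≤ Jval P f h g p x

/-!
With `s = p̂ₓ h(x) + (1 - p̂ₓ) E_x[ψ(X₁)]`, concavity puts `g` below its tangent at `s`, so
`K(x, q) - J(x)` is at most `q - p̂ₓ` times the first-order expression, which vanishes. This
needs the one-step equation `φ(x) = p̂ₓ f(x) + (1 - p̂ₓ) E_x[φ(X₁)]` (and likewise for `ψ`),
obtained by letting `n → ∞` in the recursion for `phiSeq`. The increments `dₙ` of `phiSeq`
satisfy `|dₙ| ≤ ‖d₀‖ Qⁿ w`, where `w` is the indicator of the non-absorbing states (`d₀`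
vanishes at absorbing ones), and absorption gives `Q^N w ≤ ρ w` for some `N` and `ρ < 1`;
so the increments are summable.
-/

lemma summable_pow_div_of_lt_one {ρ : ℝ} (hρ0 : 0 ≤ ρ) (hρ1 : ρ < 1) (N : ℕ) [NeZero N] :
    Summable fun n : ℕ => ρ ^ (n / N) := by
  have hprod : Summable fun k : ℕ × Fin N => ρ ^ k.1 := by
    simpa using (summable_geometric_of_lt_one hρ0 hρ1).mul_of_nonneg
      (hasSum_fintype fun _ : Fin N => (1 : ℝ)).summable (fun k => pow_nonneg hρ0 k)
      fun _ => zero_le_one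
  exact (Nat.divModEquiv N).summable_iff.mpr hprod

lemma ConcaveOn.le_add_deriv_mul_sub {S : Set ℝ} {g : ℝ → ℝ} (hgc : ConcaveOn ℝ S g)
    {s t : ℝ} (hs : s ∈ S) (ht : t ∈ S) (hg : DifferentiableAt ℝ g s) :
    g t ≤ g s + deriv g s * (t - s) := by
  rcases lt_trichotomy t s with hts | rfl | hst
  · have := hgc.deriv_le_slope ht hs hts hg
    rw [slope_def_field, le_div_iff₀ (sub_pos.2 hts)] at this
    linarith
  · simp
  · have := hgc.slope_le_deriv hs ht hst hg
    rw [slope_def_field, div_le_iff₀ (sub_pos.2 hst)] at this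
    linarith

namespace Matrix

variable {n : Type*} [Fintype n] [DecidableEq n] {M : Matrix n n ℝ}

lemma mulVec_mono_of_mem_rowStochastic (hM : M ∈ rowStochastic ℝ n) {v v' : n → ℝ}
    (h : v ≤ v') : M *ᵥ v ≤ M *ᵥ v' := by
  intro i
  have := nonneg_mulVec_of_mem_rowStochastic hM (x := v' - v) (fun j => sub_nonneg.2 (h j)) i
  rwa [mulVec_sub, Pi.sub_apply, sub_nonneg] at this

lemma abs_mulVec_le_of_mem_rowStochastic (hM : M ∈ rowStochastic ℝ n) (v : n → ℝ) :
    |M *ᵥ v| ≤ M *ᵥ |v| := fun i =>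
  (Finset.abs_sum_le_sum_abs _ _).trans_eq <| Finset.sum_congr rfl fun j _ => by
    rw [abs_mul, abs_of_nonneg (nonneg_of_mem_rowStochastic hM)]; rfl

lemma mulVec_apply_le_one_sub (hM : M ∈ rowStochastic ℝ n) {v : n → ℝ} (hv : v ≤ 1)
    {a : n} (ha : v a = 0) (i : n) : (M *ᵥ v) i ≤ 1 - M i a := by
  have hle : v ≤ 1 - Pi.single a 1 := fun j => by
    rcases eq_or_ne j a with rfl | hj
    · simp [ha]
    · simpa [hj] using hv j
  have := mulVec_mono_of_mem_rowStochastic hM hle i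
  rwa [mulVec_sub, one_vecMul_of_mem_rowStochastic hM, mulVec_single_one] at this

lemma pow_mulVec_antitone (hM : M ∈ rowStochastic ℝ n) {w : n → ℝ} (hw : M *ᵥ w ≤ w) :
    Antitone fun k => M ^ k *ᵥ w :=
  antitone_nat_of_succ_le fun k => by
    rw [pow_succ, ← mulVec_mulVec]
    exact mulVec_mono_of_mem_rowStochastic (pow_mem hM k) hw

lemma pow_mulVec_le_of_mulVec_le (hM : M ∈ rowStochastic ℝ n) {w : n → ℝ} (hw : M *ᵥ w ≤ w)
    (k : ℕ) : M ^ k *ᵥ w ≤ w := by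
  simpa using pow_mulVec_antitone hM hw (Nat.zero_le k)

lemma pow_mulVec_le_pow_div_smul (hM : M ∈ rowStochastic ℝ n) {w : n → ℝ} (hw : M *ᵥ w ≤ w)
    {N : ℕ} {ρ : ℝ} (hρ : 0 ≤ ρ) (hN : M ^ N *ᵥ w ≤ ρ • w) (k : ℕ) :
    M ^ k *ᵥ w ≤ ρ ^ (k / N) • w := by
  have hmul : ∀ j, M ^ (N * j) *ᵥ w ≤ ρ ^ j • w := by
    intro j
    induction j with
    | zero => simp
    | succ j ih =>
      calc M ^ (N * (j + 1)) *ᵥ w = M ^ (N * j) *ᵥ (M ^ N *ᵥ w) := by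
            rw [mul_add_one, pow_add, mulVec_mulVec]
        _ ≤ M ^ (N * j) *ᵥ (ρ • w) := mulVec_mono_of_mem_rowStochastic (pow_mem hM _) hN
        _ = ρ • M ^ (N * j) *ᵥ w := mulVec_smul _ _ _
        _ ≤ ρ • ρ ^ j • w := smul_le_smul_of_nonneg_left ih hρ
        _ = ρ ^ (j + 1) • w := by rw [smul_smul, pow_succ']
  calc M ^ k *ᵥ w = M ^ (N * (k / N)) *ᵥ (M ^ (k % N) *ᵥ w) := by
        rw [mulVec_mulVec, ← pow_add, Nat.div_add_mod]
    _ ≤ M ^ (N * (k / N)) *ᵥ w :=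
        mulVec_mono_of_mem_rowStochastic (pow_mem hM _) (pow_mulVec_le_of_mulVec_le hM hw _)
    _ ≤ ρ ^ (k / N) • w := hmul _

lemma abs_le_pow_mulVec_abs (hM : M ∈ rowStochastic ℝ n) {u : ℕ → n → ℝ}
    (hu : ∀ k, |u (k + 1)| ≤ M *ᵥ |u k|) (k : ℕ) : |u k| ≤ M ^ k *ᵥ |u 0| := by
  induction k with
  | zero => simp
  | succ k ih =>
    calc |u (k + 1)| ≤ M *ᵥ |u k| := hu k
      _ ≤ M *ᵥ (M ^ k *ᵥ |u 0|) := mulVec_mono_of_mem_rowStochastic hM ih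
      _ = M ^ (k + 1) *ᵥ |u 0| := by rw [mulVec_mulVec, pow_succ']

end Matrix

section AbsorbingChain

open Matrix

variable {P : E → E → ℝ}

noncomputable def nonabsorbingIndicator (P : E → E → ℝ) : E → ℝ :=
  {a | ¬IsAbsorbingState P a}.indicator 1

lemma nonabsorbingIndicator_nonneg : 0 ≤ nonabsorbingIndicator P :=
  Set.indicator_nonneg fun _ _ => zero_le_one

lemma nonabsorbingIndicator_le_one : nonabsorbingIndicator P ≤ 1 :=
  Set.indicator_le_self' fun _ _ => zero_le_one

lemma nonabsorbingIndicator_of_isAbsorbingState {a : E} (ha : IsAbsorbingState P a) :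
    nonabsorbingIndicator P a = 0 :=
  Set.indicator_of_notMem (by simpa using ha) _

lemma nonabsorbingIndicator_of_not_isAbsorbingState {a : E} (ha : ¬IsAbsorbingState P a) :
    nonabsorbingIndicator P a = 1 :=
  Set.indicator_of_mem ha _

variable [Fintype E]

lemma step_eq_mulVec (P : E → E → ℝ) (v : E → ℝ) : step P v = of P *ᵥ v := rfl

lemma IsTransition.step_apply_of_isAbsorbingState (hP : IsTransition P) {a : E}
    (ha : IsAbsorbingState P a) (v : E → ℝ) : step P v a = v a := by
  classical
  rw [step, Finset.sum_eq_single a (fun b _ hb => ?_) (by simp), ha, one_mul]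
  have hpair : P a a + P a b ≤ 1 := by
    rw [← hP.2 a, ← Finset.sum_pair hb.symm]
    exact Finset.sum_le_univ_sum_of_nonneg (hP.1 a)
  rw [le_antisymm (by linarith [ha.symm]) (hP.1 a b), zero_mul]

variable [DecidableEq E]

lemma IsTransition.mem_rowStochastic (hP : IsTransition P) : of P ∈ rowStochastic ℝ E :=
  mem_rowStochastic_iff_sum.2 hP

lemma IsTransition.mulVec_nonabsorbingIndicator_le (hP : IsTransition P) :
    of P *ᵥ nonabsorbingIndicator P ≤ nonabsorbingIndicator P := by
  intro y
  by_cases hy : IsAbsorbingState P y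
  · rw [← step_eq_mulVec, hP.step_apply_of_isAbsorbingState hy]
  · rw [nonabsorbingIndicator_of_not_isAbsorbingState hy]
    calc (of P *ᵥ nonabsorbingIndicator P) y ≤ (of P *ᵥ 1) y :=
          mulVec_mono_of_mem_rowStochastic hP.mem_rowStochastic nonabsorbingIndicator_le_one y
      _ = 1 := by rw [one_vecMul_of_mem_rowStochastic hP.mem_rowStochastic, Pi.one_apply]

lemma IsTransition.exists_pow_mulVec_nonabsorbingIndicator_le (hP : IsTransition P)
    (habs : IsAbsorbingChain P) : ∃ N, 0 < N ∧ ∃ ρ : ℝ, 0 ≤ ρ ∧ ρ < 1 ∧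
      of P ^ N *ᵥ nonabsorbingIndicator P ≤ ρ • nonabsorbingIndicator P := by
  set w := nonabsorbingIndicator P
  have hQ := hP.mem_rowStochastic
  have hw := hP.mulVec_nonabsorbingIndicator_le
  choose a m ha hm using habs
  set N := Finset.univ.sup m + 1
  have hlt : ∀ y, ‖(of P ^ N *ᵥ w) y‖ < 1 := fun y => by
    have hmN : m y ≤ N := (Finset.le_sup (Finset.mem_univ y)).trans (Nat.le_succ _)
    rw [Real.norm_of_nonneg (nonneg_mulVec_of_mem_rowStochastic (pow_mem hQ N)
      nonabsorbingIndicator_nonneg y)]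
    calc (of P ^ N *ᵥ w) y ≤ (of P ^ m y *ᵥ w) y := pow_mulVec_antitone hQ hw hmN y
      _ ≤ 1 - (of P ^ m y) y (a y) := mulVec_apply_le_one_sub (pow_mem hQ _)
          nonabsorbingIndicator_le_one (nonabsorbingIndicator_of_isAbsorbingState (ha y)) y
      _ < 1 := by linarith [hm y]
  refine ⟨N, Nat.succ_pos _, ‖of P ^ N *ᵥ w‖, norm_nonneg _, (pi_norm_lt_iff one_pos).2 hlt,
    fun y => ?_⟩
  by_cases hy : IsAbsorbingState P y
  · simpa [w, nonabsorbingIndicator_of_isAbsorbingState hy] using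
      pow_mulVec_le_of_mulVec_le hQ hw N y
  · simp only [Pi.smul_apply, w, nonabsorbingIndicator_of_not_isAbsorbingState hy,
      smul_eq_mul, mul_one]
    exact (Real.le_norm_self _).trans (norm_le_pi_norm _ y)

lemma IsTransition.summable_norm_pow_mulVec_nonabsorbingIndicator (hP : IsTransition P)
    (habs : IsAbsorbingChain P) :
    Summable fun k => ‖of P ^ k *ᵥ nonabsorbingIndicator P‖ := by
  obtain ⟨N, hN, ρ, hρ0, hρ1, hρ⟩ := hP.exists_pow_mulVec_nonabsorbingIndicator_le habs
  have : NeZero N := ⟨hN.ne'⟩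
  refine (summable_pow_div_of_lt_one hρ0 hρ1 N).of_nonneg_of_le (fun _ => norm_nonneg _)
    fun k => (pi_norm_le_iff_of_nonneg (pow_nonneg hρ0 _)).2 fun y => ?_
  have hQk := pow_mem hP.mem_rowStochastic k
  rw [Real.norm_of_nonneg (nonneg_mulVec_of_mem_rowStochastic hQk nonabsorbingIndicator_nonneg y)]
  calc (of P ^ k *ᵥ nonabsorbingIndicator P) y ≤ ρ ^ (k / N) * nonabsorbingIndicator P y :=
        pow_mulVec_le_pow_div_smul hP.mem_rowStochastic hP.mulVec_nonabsorbingIndicator_le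
          hρ0 hρ k y
    _ ≤ ρ ^ (k / N) := mul_le_of_le_one_right (pow_nonneg hρ0 _) (nonabsorbingIndicator_le_one y)

end AbsorbingChain

section ValueIteration

open Matrix Topology

variable [Fintype E] {P : E → E → ℝ} {p : E → ℝ}

lemma phiSeq_succ (P : E → E → ℝ) (p f : E → ℝ) (n : ℕ) :
    phiSeq P p f (n + 1) = p * f + (1 - p) * (of P *ᵥ phiSeq P p f n) := rfl

lemma abs_phiSeq_one_sub_le (hP : IsTransition P) (p f : E → ℝ) :
    |phiSeq P p f 1 - phiSeq P p f 0| ≤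
      ‖phiSeq P p f 1 - phiSeq P p f 0‖ • nonabsorbingIndicator P := by
  intro y
  by_cases hy : IsAbsorbingState P y
  · have hstop : phiSeq P p f 1 y = phiSeq P p f 0 y := by
      show p y * f y + (1 - p y) * step P f y = f y
      rw [hP.step_apply_of_isAbsorbingState hy]; ring
    simp [hstop, nonabsorbingIndicator_of_isAbsorbingState hy]
  · simpa [nonabsorbingIndicator_of_not_isAbsorbingState hy] using
      norm_le_pi_norm (phiSeq P p f 1 - phiSeq P p f 0) y

variable [DecidableEq E]

lemma abs_phiSeq_sub_le (hP : IsTransition P) (hp : IsStrategy p) (f : E → ℝ) (n : ℕ) :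
    |phiSeq P p f (n + 2) - phiSeq P p f (n + 1)| ≤
      of P *ᵥ |phiSeq P p f (n + 1) - phiSeq P p f n| := by
  have hdiff : phiSeq P p f (n + 2) - phiSeq P p f (n + 1) =
      (1 - p) * (of P *ᵥ (phiSeq P p f (n + 1) - phiSeq P p f n)) := by
    rw [phiSeq_succ, phiSeq_succ P p f n, mulVec_sub]; ring
  intro y
  have hpy : |1 - p y| ≤ 1 := abs_le.2 ⟨by linarith [(hp y).2], by linarith [(hp y).1]⟩
  rw [hdiff, Pi.abs_apply, Pi.mul_apply, abs_mul]
  exact (mul_le_of_le_one_left (abs_nonneg _) hpy).trans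
    (abs_mulVec_le_of_mem_rowStochastic hP.mem_rowStochastic _ y)

lemma norm_phiSeq_sub_le (hP : IsTransition P) (hp : IsStrategy p) (f : E → ℝ) (n : ℕ) :
    ‖phiSeq P p f (n + 1) - phiSeq P p f n‖ ≤
      ‖phiSeq P p f 1 - phiSeq P p f 0‖ * ‖of P ^ n *ᵥ nonabsorbingIndicator P‖ := by
  set d₀ := phiSeq P p f 1 - phiSeq P p f 0
  have hQn := pow_mem hP.mem_rowStochastic n
  refine (pi_norm_le_iff_of_nonneg (by positivity)).2 fun y => ?_
  have hd := abs_le_pow_mulVec_abs hP.mem_rowStochastic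
    (u := fun k => phiSeq P p f (k + 1) - phiSeq P p f k) (abs_phiSeq_sub_le hP hp f) n y
  have hd₀ := mulVec_mono_of_mem_rowStochastic hQn (abs_phiSeq_one_sub_le hP p f) y
  rw [mulVec_smul, Pi.smul_apply, smul_eq_mul] at hd₀
  calc ‖(phiSeq P p f (n + 1) - phiSeq P p f n) y‖
      ≤ ‖d₀‖ * (of P ^ n *ᵥ nonabsorbingIndicator P) y := hd.trans hd₀
    _ ≤ ‖d₀‖ * ‖of P ^ n *ᵥ nonabsorbingIndicator P‖ :=
        mul_le_mul_of_nonneg_left ((Real.le_norm_self _).trans (norm_le_pi_norm _ y))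
          (norm_nonneg _)

lemma tendsto_phiSeq (hP : IsTransition P) (habs : IsAbsorbingChain P) (hp : IsStrategy p)
    (f : E → ℝ) : Filter.Tendsto (phiSeq P p f) Filter.atTop (𝓝 (phi P p f)) := by
  have hcauchy : CauchySeq (phiSeq P p f) :=
    cauchySeq_of_dist_le_of_summable _
      (fun n => by rw [dist_comm, dist_eq_norm]; exact norm_phiSeq_sub_le hP hp f n)
      ((hP.summable_norm_pow_mulVec_nonabsorbingIndicator habs).mul_left _)
  obtain ⟨L, hL⟩ := cauchySeq_tendsto_of_complete hcauchy
  have hphi : phi P p f = L := funext fun y => (tendsto_pi_nhds.1 hL y).limUnder_eq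
  rwa [hphi]

lemma phi_eq_one_step (hP : IsTransition P) (habs : IsAbsorbingChain P) (hp : IsStrategy p)
    (f : E → ℝ) : phi P p f = p * f + (1 - p) * step P (phi P p f) := by
  have hcont : Continuous fun v : E → ℝ => p * f + (1 - p) * (of P *ᵥ v) := by fun_prop
  have h := tendsto_phiSeq hP habs hp f
  exact tendsto_nhds_unique (h.comp (Filter.tendsto_add_atTop_nat 1)) ((hcont.tendsto _).comp h)

end ValueIteration

/-- Corollary 4.5, second part: for concave differentiable `g`, if the first-order
condition holds with equality at every state, then the strategy is an equilibrium. -/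
theorem first_order_condition_implies_equilibrium [Fintype E] [DecidableEq E]
    (P : E → E → ℝ) (hP : IsTransition P) (habs : IsAbsorbingChain P)
    (f h : E → ℝ) (g : ℝ → ℝ)
    (hgc : ConcaveOn ℝ Set.univ g) (hg : Differentiable ℝ g)
    (phat : E → ℝ) (hphat : IsStrategy phat)
    (hFOC : ∀ x : E,
      f x - step P (phi P phat f) x
        + deriv g (phat x * h x + (1 - phat x) * step P (phi P phat h) x)
          * (h x - step P (phi P phat h) x) = 0) :
    IsEquilibrium P f h g phat := by
  intro x q _
  have hφ := congrFun (phi_eq_one_step hP habs hphat f) x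
  have hψ := congrFun (phi_eq_one_step hP habs hphat h) x
  simp only [Pi.add_apply, Pi.mul_apply, Pi.sub_apply, Pi.one_apply] at hφ hψ
  have htangent := hgc.le_add_deriv_mul_sub (Set.mem_univ _)
    (Set.mem_univ (q * h x + (1 - q) * step P (phi P phat h) x))
    (hg (phat x * h x + (1 - phat x) * step P (phi P phat h) x))
  rw [Kval, Jval, hφ, hψ]
  linear_combination htangent + (q - phat x) * hFOC x
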